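/- Let p, q, λ, θ, κ be real numbers with pq ≠ 0, λ ≠ 1, κ > 0, and assume the following triparametric Stam-type inequality holds: for every almost-everywhere differentiable probability density function h with finite φ_{p,q}[h] and N_λ[h], one has (φ_{p,q}[h] · N_λ[h])^{θ} ≥ κ. Let β ≠ 0, α ≠ 2β, and let f be a probability density function, positive and continuous on (x_i, x_f) with base point x₀, whose biparametric up transform g = 𝔘_{α,β}[f] is well defined and almost everywhere differentiable. Then ( A^{1/(1−λ)} · φ_{p,q}[g] )^{θ} ≥ |β/(α−2β)|^{βθ/(α−2β)} · κ, where A = ∫ |∫_{x₀}^x f(t)^{(β−1)/β} dt|^{β(λ−1)/(2β−α)} f(x) dx, whenever all quantities involved are finite. -/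

import Mathlib

open MeasureTheory Set Filter Topology

noncomputable section

/-- The open interval with extended-real endpoints, viewed as a set of reals. -/
def intIoo (a b : EReal) : Set ℝ := {x : ℝ | a < (x : EReal) ∧ (x : EReal) < b}

/-! Substituting `v = u x` in `∫ g ^ λ` is legitimate away from the base point `x₀`, where
`u' = -|Y / e| ^ e * f` with `e = β / (α - 2β)`. Since `g (u x) = |Y / e| ^ (-e)`, the powers of `|Y|`
combine to `e (1 - λ)` and `∫ g ^ λ = |e| ^ (-e (1 - λ)) * A`, i.e. `A ^ (1 / (1 - λ)) = |e| ^ e N_λ[g]`.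
The Stam inequality for `g` then gives the claim. -/

section intIoo

variable {a b : EReal}

lemma isOpen_intIoo (a b : EReal) : IsOpen (intIoo a b) :=
  isOpen_Ioo.preimage continuous_coe_real_ereal

instance ordConnected_intIoo (a b : EReal) : OrdConnected (intIoo a b) :=
  ordConnected_Ioo.preimage_mono fun _ _ => EReal.coe_le_coe_iff.mpr

lemma intIoo_nontrivial (h : a < b) : (intIoo a b).Nontrivial := by
  obtain ⟨x, hax, hxb⟩ := EReal.exists_between_coe_real h
  obtain ⟨y, hxy, hyb⟩ := EReal.exists_between_coe_real hxb
  exact ⟨x, ⟨hax, hxb⟩, y, ⟨hax.trans hxy, hyb⟩, (EReal.coe_lt_coe_iff.mp hxy).ne⟩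

lemma intIoo_subset_of_mem {x : ℝ} (hx : x ∈ intIoo a b) : intIoo x b ⊆ intIoo a b :=
  fun _ hr => ⟨hx.1.trans hr.1, hr.2⟩

lemma uIoo_subset_intIoo {x₀ x : ℝ} (h₀a : a ≤ x₀) (h₀b : (x₀ : EReal) ≤ b)
    (hx : x ∈ intIoo a b) : uIoo x₀ x ⊆ intIoo a b := by
  intro t ⟨hlt, hgt⟩
  constructor
  · rcases min_lt_iff.mp hlt with h | h
    · exact h₀a.trans_lt (EReal.coe_lt_coe_iff.mpr h)
    · exact hx.1.trans (EReal.coe_lt_coe_iff.mpr h)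
  · rcases lt_max_iff.mp hgt with h | h
    · exact (EReal.coe_lt_coe_iff.mpr h).trans_le h₀b
    · exact (EReal.coe_lt_coe_iff.mpr h).trans hx.2

lemma intIoo_eq_Ioc_union {x y : ℝ} (hxy : x ≤ y) (hy : (y : EReal) < b) :
    intIoo x b = Ioc x y ∪ intIoo y b := by
  ext r
  simp only [intIoo, mem_ofPred_eq, mem_union, mem_Ioc, EReal.coe_lt_coe_iff]
  constructor
  · rintro ⟨hxr, hrb⟩
    exact (le_or_gt r y).imp (fun hry => ⟨hxr, hry⟩) fun hyr => ⟨hyr, hrb⟩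
  · rintro (⟨hxr, hry⟩ | ⟨hyr, hrb⟩)
    · exact ⟨hxr, (EReal.coe_le_coe_iff.mpr hry).trans_lt hy⟩
    · exact ⟨hxy.trans_lt hyr, hrb⟩

lemma hasDerivAt_setIntegral_intIoo {w : ℝ → ℝ} {a x : ℝ} (hx : x ∈ intIoo a b)
    (hw : IntegrableOn w (intIoo a b)) (hwm : StronglyMeasurableAtFilter w (𝓝 x))
    (hwc : ContinuousAt w x) :
    HasDerivAt (fun y : ℝ => ∫ r in intIoo y b, w r) (-w x) x := by
  have hsplit : ∀ y ∈ intIoo a b,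
      ∫ r in intIoo y b, w r = (∫ r in intIoo a b, w r) - ∫ r in a..y, w r := by
    intro y hy
    have hay : a ≤ y := EReal.coe_le_coe_iff.mp hy.1.le
    rw [intIoo_eq_Ioc_union hay hy.2, intervalIntegral.integral_of_le hay,
      setIntegral_union ?_ (isOpen_intIoo _ _).measurableSet
        (hw.mono_set (intIoo_eq_Ioc_union hay hy.2 ▸ subset_union_left))
        (hw.mono_set (intIoo_subset_of_mem hy))]
    · ring
    · exact disjoint_left.mpr fun r hr hr' => (EReal.coe_lt_coe_iff.mp hr'.1).not_ge hr.2
  have hax : a ≤ x := EReal.coe_le_coe_iff.mp hx.1.le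
  have hFTC : HasDerivAt (fun y => ∫ r in a..y, w r) (w x) x :=
    intervalIntegral.integral_hasDerivAt_right
      ((intervalIntegrable_iff_integrableOn_Ioc_of_le hax).mpr
        (hw.mono_set (intIoo_eq_Ioc_union hax hx.2 ▸ subset_union_left))) hwm hwc
  exact (hFTC.const_sub _).congr_of_eventuallyEq
    (eventuallyEq_of_mem ((isOpen_intIoo _ _).mem_nhds hx) hsplit)

lemma hasDerivAt_of_eqOn_setIntegral_intIoo {u w : ℝ → ℝ} {U : Set ℝ} (hU : IsOpen U)
    (hUab : U ⊆ intIoo a b) (hu : EqOn u (fun y : ℝ => ∫ r in intIoo y b, w r) (intIoo a b))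
    (hw : ∀ y ∈ intIoo a b, IntegrableOn w (intIoo y b)) (hwc : ContinuousOn w U) {x : ℝ}
    (hx : x ∈ U) : HasDerivAt u (-w x) x := by
  obtain ⟨y, hay, hyx⟩ := EReal.exists_between_coe_real (hUab hx).1
  refine HasDerivAt.congr_of_eventuallyEq ?_
    (eventuallyEq_of_mem ((isOpen_intIoo a b).mem_nhds (hUab hx)) hu)
  exact hasDerivAt_setIntegral_intIoo ⟨hyx, (hUab hx).2⟩ (hw y ⟨hay, hyx.trans (hUab hx).2⟩)
    (hwc.stronglyMeasurableAtFilter hU x hx) (hwc.continuousAt (hU.mem_nhds hx))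

lemma exists_ne_zero_of_injOn_setIntegral_intIoo {c e : ℝ} {f Y u : ℝ → ℝ} (hab : a < b)
    (he : e ≠ 0) (hu : ∀ x ∈ intIoo a b, u x = ∫ r in intIoo x b, |c * Y r| ^ e * f r)
    (hinj : InjOn u (intIoo a b)) : ∃ y ∈ intIoo a b, Y y ≠ 0 := by
  by_contra! hY0
  have hu0 : ∀ x ∈ intIoo a b, u x = 0 := fun x hx => by
    rw [hu x hx]
    exact setIntegral_eq_zero_of_forall_eq_zero fun r hr => by
      rw [hY0 r (intIoo_subset_of_mem hx hr), mul_zero, abs_zero, Real.zero_rpow he, zero_mul]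
  obtain ⟨x, hx, y, hy, hxy⟩ := intIoo_nontrivial hab
  exact hxy (hinj hx hy (by rw [hu0 x hx, hu0 y hy]))

end intIoo

lemma intervalIntegrable_of_continuousOn_of_integral_ne_zero {φ : ℝ → ℝ} {s : Set ℝ}
    [hs : OrdConnected s] (hφ : ContinuousOn φ s) {x₀ x y : ℝ} (hy : y ∈ s)
    (h : ∫ t in x₀..y, φ t ≠ 0) (hx : x ∈ s) : IntervalIntegrable φ volume x₀ x :=
  (intervalIntegral.intervalIntegrable_of_integral_ne_zero h).trans
    (hφ.mono (hs.uIcc_subset hy hx)).intervalIntegrable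

lemma intervalIntegral_ne_zero_of_pos_on_uIoo {φ : ℝ → ℝ} {a b : ℝ} (hab : a ≠ b)
    (hφi : IntervalIntegrable φ volume a b) (hφ : ∀ t ∈ uIoo a b, 0 < φ t) :
    ∫ t in a..b, φ t ≠ 0 := by
  rcases hab.lt_or_gt with h | h
  · refine (intervalIntegral.intervalIntegral_pos_of_pos_on hφi (fun t ht => hφ t ?_) h).ne'
    simpa [uIoo, h.le] using ht
  · rw [intervalIntegral.integral_symm]
    refine neg_ne_zero.mpr
      (intervalIntegral.intervalIntegral_pos_of_pos_on hφi.symm (fun t ht => hφ t ?_) h).ne'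
    simpa [uIoo, h.le] using ht

lemma hasDerivAt_tail_integral_of_primitive {a b : EReal} {x₀ y c e : ℝ} {φ f Y u : ℝ → ℝ}
    (h₀a : a ≤ x₀) (h₀b : (x₀ : EReal) ≤ b) (hc : c ≠ 0) (hφ : ContinuousOn φ (intIoo a b))
    (hφpos : ∀ x ∈ intIoo a b, 0 < φ x) (hf : ContinuousOn f (intIoo a b))
    (hY : ∀ x, Y x = ∫ t in x₀..x, φ t) (hy : y ∈ intIoo a b) (hYy : Y y ≠ 0)
    (hu_fin : ∀ x ∈ intIoo a b, IntegrableOn (fun r => |c * Y r| ^ e * f r) (intIoo x b))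
    (hu : ∀ x ∈ intIoo a b, u x = ∫ r in intIoo x b, |c * Y r| ^ e * f r) :
    ∀ x ∈ intIoo a b \ {x₀}, HasDerivAt u (-(|c * Y x| ^ e * f x)) x := by
  have hI : IsOpen (intIoo a b) := isOpen_intIoo a b
  rw [hY] at hYy
  have hφi : ∀ x ∈ intIoo a b, IntervalIntegrable φ volume x₀ x :=
    fun x hx => intervalIntegrable_of_continuousOn_of_integral_ne_zero hφ hy hYy hx
  have hYd : ∀ x ∈ intIoo a b, HasDerivAt Y (φ x) x := fun x hx => by
    rw [funext hY]
    exact intervalIntegral.integral_hasDerivAt_right (hφi x hx)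
      (hφ.stronglyMeasurableAtFilter hI x hx) (hφ.continuousAt (hI.mem_nhds hx))
  have hY0 : ∀ x ∈ intIoo a b \ {x₀}, Y x ≠ 0 := fun x hx => by
    rw [hY]
    exact intervalIntegral_ne_zero_of_pos_on_uIoo (Ne.symm hx.2) (hφi x hx.1) fun t ht =>
      hφpos t (uIoo_subset_intIoo h₀a h₀b hx.1 ht)
  have hw : ContinuousOn (fun r => |c * Y r| ^ e * f r) (intIoo a b \ {x₀}) := fun x hx =>
    (((continuousAt_const.mul (hYd x hx.1).continuousAt).abs.rpow_const
      (Or.inl (abs_ne_zero.mpr (mul_ne_zero hc (hY0 x hx))))).mul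
      (hf.continuousAt (hI.mem_nhds hx.1))).continuousWithinAt
  exact fun x hx => hasDerivAt_of_eqOn_setIntegral_intIoo (hI.sdiff isClosed_singleton)
    sdiff_subset hu hu_fin hw hx

theorem integral_image_eq_integral_abs_deriv_smul_of_hasDerivAt_sdiff_singleton
    {E : Type*} [NormedAddCommGroup E] [NormedSpace ℝ E] {s : Set ℝ} (hs : MeasurableSet s)
    {u u' : ℝ → ℝ} {a : ℝ} (hu : ∀ x ∈ s \ {a}, HasDerivAt u (u' x) x) (hinj : InjOn u s)
    (F : ℝ → E) : ∫ v in u '' s, F v = ∫ x in s, |u' x| • F (u x) := by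
  have himage : u '' (s \ {a}) =ᵐ[volume] u '' s := by
    rw [hinj.image_sdiff]
    refine sdiff_null_ae_eq_self (measure_mono_null (image_mono inter_subset_right) ?_)
    rw [image_singleton]
    exact measure_singleton _
  rw [← setIntegral_congr_set himage,
    integral_image_eq_integral_abs_deriv_smul (hs.diff (measurableSet_singleton a))
      (fun x hx => (hu x hx).hasDerivWithinAt) (hinj.mono sdiff_subset)]
  exact setIntegral_congr_set (sdiff_null_ae_eq_self (measure_singleton a))

lemma ne_zero_of_integrable_rpow {g : ℝ → ℝ} {lam : ℝ} (h : Integrable fun x => g x ^ lam) :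
    lam ≠ 0 := by
  rintro rfl
  simp only [Real.rpow_zero] at h
  have := (integrable_const_iff_isFiniteMeasure one_ne_zero).mp h
  simpa using measure_lt_top (volume : Measure ℝ) univ

lemma rpow_mul_rpow_neg_rpow {t e lam : ℝ} (ht : 0 ≤ t) (he : e ≠ 0) (hlam : lam ≠ 1) :
    t ^ e * (t ^ (-e)) ^ lam = t ^ (e * (1 - lam)) := by
  rcases ht.eq_or_lt with rfl | ht
  · rw [Real.zero_rpow he, zero_mul, Real.zero_rpow (mul_ne_zero he (sub_ne_zero.mpr hlam.symm))]
  · rw [← Real.rpow_mul ht.le, ← Real.rpow_add ht]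
    ring_nf

lemma rpow_mul_le_rpow_of_eq_rpow_mul {A N F t e s θ κ : ℝ} (ht : 0 < t) (hs : s ≠ 0)
    (hN : 0 ≤ N) (hF : 0 ≤ F) (hNA : N = t ^ (-(e * s)) * A) (hκ : (F * N ^ (1 / s)) ^ θ ≥ κ) :
    (A ^ (1 / s) * F) ^ θ ≥ t ^ (e * θ) * κ := by
  have hA : A = t ^ (e * s) * N := by
    rw [hNA, ← mul_assoc, ← Real.rpow_add ht, add_neg_cancel, Real.rpow_zero, one_mul]
  have hA' : A ^ (1 / s) = t ^ e * N ^ (1 / s) := by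
    rw [hA, Real.mul_rpow (Real.rpow_nonneg ht.le _) hN, ← Real.rpow_mul ht.le]
    field_simp
  rw [hA', mul_assoc, Real.mul_rpow (Real.rpow_nonneg ht.le _)
    (mul_nonneg (Real.rpow_nonneg hN _) hF), ← Real.rpow_mul ht.le, mul_comm (N ^ _)]
  exact mul_le_mul_of_nonneg_left hκ (Real.rpow_nonneg ht.le _)

theorem integral_rpow_eq_of_up_transform {s : Set ℝ} (hs : MeasurableSet s) {x₀ e lam : ℝ}
    {f Y u g : ℝ → ℝ} (he : e ≠ 0) (hlam0 : lam ≠ 0) (hlam1 : lam ≠ 1) (hf : ∀ x ∈ s, 0 ≤ f x)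
    (hu : ∀ x ∈ s \ {x₀}, HasDerivAt u (-(|e⁻¹ * Y x| ^ e * f x)) x) (hinj : InjOn u s)
    (hg : ∀ x ∈ s, g (u x) = |e⁻¹ * Y x| ^ (-e)) (hg_supp : ∀ v ∉ u '' s, g v = 0) :
    ∫ v, g v ^ lam = |e| ^ (-(e * (1 - lam))) * ∫ x in s, |Y x| ^ (e * (1 - lam)) * f x := by
  rw [← setIntegral_eq_integral_of_forall_compl_eq_zero fun v hv => by
      rw [hg_supp v hv, Real.zero_rpow hlam0],
    integral_image_eq_integral_abs_deriv_smul_of_hasDerivAt_sdiff_singleton hs hu hinj,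
    ← integral_const_mul]
  refine setIntegral_congr_fun hs fun x hx => ?_
  rw [smul_eq_mul, abs_neg, hg x hx,
    abs_of_nonneg (mul_nonneg (Real.rpow_nonneg (abs_nonneg _) _) (hf x hx)), mul_right_comm,
    rpow_mul_rpow_neg_rpow (abs_nonneg _) he hlam1, abs_mul, abs_inv,
    Real.mul_rpow (inv_nonneg.mpr (abs_nonneg _)) (abs_nonneg _),
    Real.inv_rpow (abs_nonneg _), ← Real.rpow_neg (abs_nonneg _)]
  ring

theorem stam_inequality_transferred_to_biparametric_up_transform_general
    (p q lam θ κ : ℝ)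
    (hlam : lam ≠ 1)
    (hStam : ∀ h h' : ℝ → ℝ, Measurable h → (∀ x, 0 ≤ h x) → (∫ x, h x) = 1 →
      (∀ᵐ x ∂(volume : Measure ℝ), HasDerivAt h (h' x) x) →
      Integrable (fun x => |h x ^ (q - 2) * h' x| ^ p * h x) →
      Integrable (fun x => h x ^ lam) →
      ((∫ x, |h x ^ (q - 2) * h' x| ^ p * h x) ^ ((1 : ℝ) / (p * q))
        * (∫ x, h x ^ lam) ^ ((1 : ℝ) / (1 - lam))) ^ θ ≥ κ)
    (α β : ℝ) (hβ : β ≠ 0) (hαβ : α ≠ 2 * β)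
    (xi xf : EReal) (hif : xi < xf)
    (x₀ : ℝ) (hx₀l : xi ≤ (x₀ : EReal)) (hx₀r : (x₀ : EReal) ≤ xf)
    (f Y u g g' : ℝ → ℝ)
    (hf_pos : ∀ x ∈ intIoo xi xf, 0 < f x)
    (hf_cont : ContinuousOn f (intIoo xi xf))
    (hY : ∀ x, Y x = ∫ t in x₀..x, f t ^ ((β - 1) / β))
    (hu_fin : ∀ x ∈ intIoo xi xf,
      IntegrableOn (fun r => |((α - 2 * β) / β) * Y r| ^ (β / (α - 2 * β)) * f r)
        (intIoo (x : EReal) xf))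
    (hu : ∀ x ∈ intIoo xi xf,
      u x = ∫ r in intIoo (x : EReal) xf,
        |((α - 2 * β) / β) * Y r| ^ (β / (α - 2 * β)) * f r)
    (hu_anti : StrictAntiOn u (intIoo xi xf))
    (hg : ∀ x ∈ intIoo xi xf,
      g (u x) = |((α - 2 * β) / β) * Y x| ^ (β / (2 * β - α)))
    (hg_supp : ∀ v ∉ u '' intIoo xi xf, g v = 0)
    (hg_meas : Measurable g)
    (hg_nonneg : ∀ v, 0 ≤ g v)
    (hg_int : (∫ v, g v) = 1)
    (hg' : ∀ᵐ v ∂(volume : Measure ℝ), HasDerivAt g (g' v) v)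
    (hfin1 : Integrable (fun v => |g v ^ (q - 2) * g' v| ^ p * g v))
    (hfin2 : Integrable (fun v => g v ^ lam)) :
    ((∫ x in intIoo xi xf,
        |∫ t in x₀..x, f t ^ ((β - 1) / β)| ^ (β * (lam - 1) / (2 * β - α)) * f x)
        ^ ((1 : ℝ) / (1 - lam))
      * (∫ v, |g v ^ (q - 2) * g' v| ^ p * g v) ^ ((1 : ℝ) / (p * q))) ^ θ
    ≥ |β / (α - 2 * β)| ^ (β * θ / (α - 2 * β)) * κ := by
  set e := β / (α - 2 * β) with he_def
  have he : e ≠ 0 := div_ne_zero hβ (sub_ne_zero.mpr hαβ)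
  have hflip : 2 * β - α = -(α - 2 * β) := by ring
  have hc : (α - 2 * β) / β = e⁻¹ := (inv_div _ _).symm
  have hneg : β / (2 * β - α) = -e := by rw [hflip, div_neg]
  have hE : β * (lam - 1) / (2 * β - α) = e * (1 - lam) := by
    rw [hflip, div_neg, he_def]; ring
  have hθ : β * θ / (α - 2 * β) = e * θ := by rw [he_def]; ring
  rw [hc] at hu hu_fin hg
  rw [hneg] at hg
  simp only [← hY, hE, hθ]
  have hφ : ContinuousOn (fun t => f t ^ ((β - 1) / β)) (intIoo xi xf) :=
    hf_cont.rpow_const fun x hx => Or.inl (hf_pos x hx).ne'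
  -- `Y` cannot vanish on all of `intIoo xi xf`, so the integral defining it converges near `x₀`
  -- (a divergent one has the junk value `0`).
  obtain ⟨y, hy, hYy⟩ := exists_ne_zero_of_injOn_setIntegral_intIoo hif he hu hu_anti.injOn
  have hN := integral_rpow_eq_of_up_transform (isOpen_intIoo xi xf).measurableSet he
    (ne_zero_of_integrable_rpow hfin2) hlam (fun x hx => (hf_pos x hx).le)
    (hasDerivAt_tail_integral_of_primitive hx₀l hx₀r (inv_ne_zero he) hφ
      (fun x hx => Real.rpow_pos_of_pos (hf_pos x hx) _) hf_cont hY hy hYy hu_fin hu)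
    hu_anti.injOn hg hg_supp
  exact rpow_mul_le_rpow_of_eq_rpow_mul (abs_pos.mpr he) (sub_ne_zero.mpr hlam.symm)
    (integral_nonneg fun v => Real.rpow_nonneg (hg_nonneg v) _)
    (Real.rpow_nonneg (integral_nonneg fun v =>
      mul_nonneg (Real.rpow_nonneg (abs_nonneg _) _) (hg_nonneg v)) _)
    hN (hStam g g' hg_meas hg_nonneg hg_int hg' hfin1 hfin2)

/-- transferring a triparametric Stam-type inequality
`(φ_{p,q}[h] N_λ[h])^θ ≥ κ` to the biparametric up transform `g = 𝔘_{α,β}[f]`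
yields `(A^{1/(1-λ)} φ_{p,q}[g])^θ ≥ |β/(α-2β)|^{βθ/(α-2β)} κ`. -/
theorem stam_inequality_transferred_to_biparametric_up_transform
    (p q lam θ κ : ℝ)
    (hp : p ≠ 0) (hq : q ≠ 0) (hlam : lam ≠ 1) (hκ : 0 < κ)
    (hStam : ∀ h h' : ℝ → ℝ, Measurable h → (∀ x, 0 ≤ h x) → (∫ x, h x) = 1 →
      (∀ᵐ x ∂(volume : Measure ℝ), HasDerivAt h (h' x) x) →
      Integrable (fun x => |h x ^ (q - 2) * h' x| ^ p * h x) →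
      Integrable (fun x => h x ^ lam) →
      ((∫ x, |h x ^ (q - 2) * h' x| ^ p * h x) ^ ((1 : ℝ) / (p * q))
        * (∫ x, h x ^ lam) ^ ((1 : ℝ) / (1 - lam))) ^ θ ≥ κ)
    (α β : ℝ) (hβ : β ≠ 0) (hαβ : α ≠ 2 * β)
    (xi xf : EReal) (hif : xi < xf)
    (x₀ : ℝ) (hx₀l : xi ≤ (x₀ : EReal)) (hx₀r : (x₀ : EReal) ≤ xf)
    (f Y u g g' : ℝ → ℝ)
    (hf_meas : Measurable f)
    (hf_nonneg : ∀ x, 0 ≤ f x)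
    (hf_supp : ∀ x ∉ intIoo xi xf, f x = 0)
    (hf_int : (∫ x, f x) = 1)
    (hf_pos : ∀ x ∈ intIoo xi xf, 0 < f x)
    (hf_cont : ContinuousOn f (intIoo xi xf))
    (hY : ∀ x, Y x = ∫ t in x₀..x, f t ^ ((β - 1) / β))
    (hu_fin : ∀ x ∈ intIoo xi xf,
      IntegrableOn (fun r => |((α - 2 * β) / β) * Y r| ^ (β / (α - 2 * β)) * f r)
        (intIoo (x : EReal) xf))
    (hu : ∀ x ∈ intIoo xi xf,
      u x = ∫ r in intIoo (x : EReal) xf,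
        |((α - 2 * β) / β) * Y r| ^ (β / (α - 2 * β)) * f r)
    (hu_anti : StrictAntiOn u (intIoo xi xf))
    (hg : ∀ x ∈ intIoo xi xf,
      g (u x) = |((α - 2 * β) / β) * Y x| ^ (β / (2 * β - α)))
    (hg_supp : ∀ v ∉ u '' intIoo xi xf, g v = 0)
    (hg_meas : Measurable g)
    (hg_nonneg : ∀ v, 0 ≤ g v)
    (hg_int : (∫ v, g v) = 1)
    (hg' : ∀ᵐ v ∂(volume : Measure ℝ), HasDerivAt g (g' v) v)
    (hfin1 : Integrable (fun v => |g v ^ (q - 2) * g' v| ^ p * g v))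
    (hfin2 : Integrable (fun v => g v ^ lam))
    (hfin3 : IntegrableOn
      (fun x => |∫ t in x₀..x, f t ^ ((β - 1) / β)| ^ (β * (lam - 1) / (2 * β - α)) * f x)
      (intIoo xi xf)) :
    ((∫ x in intIoo xi xf,
        |∫ t in x₀..x, f t ^ ((β - 1) / β)| ^ (β * (lam - 1) / (2 * β - α)) * f x)
        ^ ((1 : ℝ) / (1 - lam))
      * (∫ v, |g v ^ (q - 2) * g' v| ^ p * g v) ^ ((1 : ℝ) / (p * q))) ^ θ
    ≥ |β / (α - 2 * β)| ^ (β * θ / (α - 2 * β)) * κ :=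
  stam_inequality_transferred_to_biparametric_up_transform_general p q lam θ κ hlam hStam α β hβ hαβ
    xi xf hif x₀ hx₀l hx₀r f Y u g g' hf_pos hf_cont hY hu_fin hu hu_anti hg hg_supp hg_meas
    hg_nonneg hg_int hg' hfin1 hfin2
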